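/- Every valid LCSk chain yields a common subsequence: if (i_1,j_1),...,(i_ℓ,j_ℓ) is a chain of non-overlapping k-matchings of A and B, then the concatenation A[i_1..i_1+k-1] · A[i_2..i_2+k-1] · ... · A[i_ℓ..i_ℓ+k-1] is a common subsequence of A and B of length k·ℓ; hence LCS(A,B) ≥ k·LCSk(A,B). -/

import Mathlib

/-- `c` is a valid chain of non-overlapping `k`-matchings between `A` and `B`
(0-based starting indices). -/
def IsKChain {α : Type*} (A B : List α) (k : ℕ) (c : List (ℕ × ℕ)) : Prop :=
  c.Chain' (fun p q => p.1 + k ≤ q.1 ∧ p.2 + k ≤ q.2) ∧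
  ∀ p ∈ c, p.1 + k ≤ A.length ∧ p.2 + k ≤ B.length ∧
    ∀ f < k, A[p.1 + f]? = B[p.2 + f]?

/-- `LCSk A B k`: maximal number of order-preserving non-overlapping common
`k`-length substrings. -/
noncomputable def LCSk {α : Type*} (A B : List α) (k : ℕ) : ℕ :=
  sSup {l | ∃ c, IsKChain A B k c ∧ c.length = l}

/-- Classical longest common subsequence length. -/
noncomputable def LCS {α : Type*} (A B : List α) : ℕ :=
  sSup {l | ∃ C : List α, C.Sublist A ∧ C.Sublist B ∧ C.length = l}

/-!
The blocks `A[i_f, i_f + k)` of a chain lie in disjoint windows of `A` that appear in increasing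
order, so their concatenation is a subsequence of `A`; since each block equals `B[j_f, j_f + k)`
and the `j_f` increase by at least `k` as well, the same argument places it in `B`. Every block
lies inside `A`, so it has exactly `k` letters. Applied to a longest chain this gives a common
subsequence of length `k · LCSk A B k`.
-/

namespace List

variable {α : Type*}

theorem take_drop_eq_take_drop_of_getElem?_eq {A B : List α} {k i j : ℕ}
    (h : ∀ f < k, A[i + f]? = B[j + f]?) :
    (A.drop i).take k = (B.drop j).take k := by
  refine ext_getElem? fun f => ?_
  by_cases hf : f < k
  · simp only [getElem?_take, if_pos hf, getElem?_drop, h f hf]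
  · simp only [getElem?_take, if_neg hf]

theorem flatten_map_take_drop_sublist_drop (A : List α) {k n : ℕ} {c : List ℕ}
    (hc : c.IsChain (fun a b => a + k ≤ b)) (hn : ∀ i ∈ c.head?, n ≤ i) :
    (c.map fun i => (A.drop i).take k).flatten <+ A.drop n := by
  induction c generalizing n with
  | nil => simp
  | cons i c ih =>
    have hrest : (c.map fun i => (A.drop i).take k).flatten <+ A.drop (i + k) :=
      ih hc.tail fun _ hj => hc.rel_head? hj
    calc (A.drop i).take k ++ (c.map fun i => (A.drop i).take k).flatten
        <+ (A.drop i).take k ++ A.drop (i + k) := hrest.append_left _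
      _ = A.drop i := by rw [← drop_drop, take_append_drop]
      _ <+ A.drop n := A.drop_sublist_drop_left (hn i rfl)

theorem flatten_map_take_drop_sublist (A : List α) {k : ℕ} {c : List ℕ}
    (hc : c.IsChain (fun a b => a + k ≤ b)) :
    (c.map fun i => (A.drop i).take k).flatten <+ A := by
  simpa using A.flatten_map_take_drop_sublist_drop (n := 0) hc (by simp)

end List

namespace IsKChain

open scoped List

variable {α : Type*} {A B : List α} {k : ℕ} {c : List (ℕ × ℕ)}

theorem flatten_sublist_left (hc : IsKChain A B k c) :
    (c.map fun p => (A.drop p.1).take k).flatten <+ A := by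
  simpa only [List.map_map, Function.comp_def] using
    A.flatten_map_take_drop_sublist <| (List.isChain_map Prod.fst).2 <| hc.1.imp fun _ _ h => h.1

theorem map_take_drop_left_eq_right (hc : IsKChain A B k c) :
    c.map (fun p => (A.drop p.1).take k) = c.map (fun p => (B.drop p.2).take k) :=
  List.map_congr_left fun p hp =>
    List.take_drop_eq_take_drop_of_getElem?_eq (hc.2 p hp).2.2

theorem flatten_sublist_right (hc : IsKChain A B k c) :
    (c.map fun p => (A.drop p.1).take k).flatten <+ B := by
  rw [hc.map_take_drop_left_eq_right]
  simpa only [List.map_map, Function.comp_def] using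
    B.flatten_map_take_drop_sublist <| (List.isChain_map Prod.snd).2 <| hc.1.imp fun _ _ h => h.2

theorem length_flatten (hc : IsKChain A B k c) :
    (c.map fun p => (A.drop p.1).take k).flatten.length = k * c.length := by
  have hblock : ∀ p ∈ c, ((A.drop p.1).take k).length = k := fun p hp => by
    have := (hc.2 p hp).1
    simp only [List.length_take, List.length_drop]
    omega
  rw [List.length_flatten, List.map_map, Function.comp_def, List.map_congr_left hblock,
    List.map_const', List.sum_replicate, smul_eq_mul, mul_comm]

theorem mul_length_le (hc : IsKChain A B k c) : k * c.length ≤ A.length :=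
  hc.length_flatten ▸ hc.flatten_sublist_left.length_le

end IsKChain

theorem length_le_LCS {α : Type*} {A B C : List α} (hA : C.Sublist A) (hB : C.Sublist B) :
    C.length ≤ LCS A B :=
  le_csSup ⟨A.length, fun _ ⟨_, hA', _, hl⟩ => hl ▸ hA'.length_le⟩ ⟨C, hA, hB, rfl⟩

theorem exists_isKChain_length_eq_LCSk {α : Type*} (A B : List α) {k : ℕ} (hk : 0 < k) :
    ∃ c, IsKChain A B k c ∧ c.length = LCSk A B k := by
  have hbdd : BddAbove {l | ∃ c, IsKChain A B k c ∧ c.length = l} :=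
    ⟨A.length, fun _ ⟨c, hc, hl⟩ => hl ▸ (Nat.le_mul_of_pos_left _ hk).trans hc.mul_length_le⟩
  refine Nat.sSup_mem ?_ hbdd
  exact ⟨0, [], ⟨List.isChain_nil, by simp⟩, rfl⟩

theorem chain_yields_common_subsequence_general {α : Type*} (A B : List α) (k : ℕ) :
    (∀ c : List (ℕ × ℕ), IsKChain A B k c →
      ((c.map (fun p => ((A.drop p.1).take k))).flatten.Sublist A ∧
       (c.map (fun p => ((A.drop p.1).take k))).flatten.Sublist B ∧
       (c.map (fun p => ((A.drop p.1).take k))).flatten.length = k * c.length)) ∧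
    k * LCSk A B k ≤ LCS A B := by
  refine ⟨fun c hc => ⟨hc.flatten_sublist_left, hc.flatten_sublist_right, hc.length_flatten⟩, ?_⟩
  rcases Nat.eq_zero_or_pos k with rfl | hk
  · simp
  obtain ⟨c, hc, hlen⟩ := exists_isKChain_length_eq_LCSk A B hk
  rw [← hlen, ← hc.length_flatten]
  exact length_le_LCS hc.flatten_sublist_left hc.flatten_sublist_right

/-- every valid chain of non-overlapping `k`-matchings yields,
by concatenating the matched `k`-length substrings of `A`, a common subsequence
of `A` and `B` of length `k·ℓ`; hence `k·LCSk(A,B) ≤ LCS(A,B)`. -/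
theorem chain_yields_common_subsequence {α : Type*} (A B : List α) (k : ℕ)
    (hk : 1 ≤ k) :
    (∀ c : List (ℕ × ℕ), IsKChain A B k c →
      ((c.map (fun p => ((A.drop p.1).take k))).flatten.Sublist A ∧
       (c.map (fun p => ((A.drop p.1).take k))).flatten.Sublist B ∧
       (c.map (fun p => ((A.drop p.1).take k))).flatten.length = k * c.length)) ∧
    k * LCSk A B k ≤ LCS A B :=
  chain_yields_common_subsequence_general A B k
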